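/- For every y ∈ [0,1]: Σ_{n=1}^N K_n·KI_n(y) = 1, where K_n = S_n^{-1} − 1 and S_n = Σ_{j∈Ω} p_j/k_{n,j}. -/

import Mathlib

open Set

noncomputable section

/-- `T_ω = T_{ω_t} ∘ ⋯ ∘ T_{ω_1}` (head of the list applied first). -/
def rwordApply (T : ℕ → ℝ → ℝ) : List ℕ → ℝ → ℝ
  | [], y => y
  | j :: ω, y => rwordApply T ω (T j y)

/-- the weighted slope product `δ_ω(y,|ω|)`; `ι x` is the index of the
partition interval containing `x`. -/
def rdelta (p : ℕ → ℝ) (k : ℕ → ℕ → ℝ) (ι : ℝ → ℕ) (T : ℕ → ℝ → ℝ) :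
    List ℕ → ℝ → ℝ
  | [], _ => 1
  | j :: ω, y => p j / k (ι y) j * rdelta p k ι T ω (T j y)

/-- the random piecewise linear map with slopes `k`, intercepts `d`. -/
def Tpl (k d : ℕ → ℕ → ℝ) (ι : ℝ → ℕ) (j : ℕ) (x : ℝ) : ℝ :=
  k (ι x) j * x + d (ι x) j

/-- finite words with letters in `Ωs`. -/
def Words (Ωs : Set ℕ) : Type := {ω : List ℕ // ∀ j ∈ ω, j ∈ Ωs}

/-- `KI_n(y) = Σ_{t≥1} Σ_{ω ∈ Ωᵗ} δ_ω(y,t)·1_{I_n}(T_{ω₁^{t-1}}(y))`. -/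
def KI (Ωs : Set ℕ) (p : ℕ → ℝ) (k : ℕ → ℕ → ℝ) (ι : ℝ → ℕ) (T : ℕ → ℝ → ℝ)
    (n : ℕ) (y : ℝ) : ℝ :=
  ∑' ω : {ω : List ℕ // (∀ j ∈ ω, j ∈ Ωs) ∧ ω ≠ []},
    if ι (rwordApply T ω.1.dropLast y) = n then rdelta p k ι T ω.1 y else 0

/-- `KA_i(y) = Σ_{t≥0} Σ_{ω ∈ Ωᵗ} δ_ω(y,t)·1_{I_1 ∪ ⋯ ∪ I_i}(T_ω(y))`. -/
def KA (Ωs : Set ℕ) (p : ℕ → ℝ) (k : ℕ → ℕ → ℝ) (ι : ℝ → ℕ) (T : ℕ → ℝ → ℝ)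
    (i : ℕ) (y : ℝ) : ℝ :=
  ∑' ω : Words Ωs,
    if ι (rwordApply T ω.1 y) ≤ i then rdelta p k ι T ω.1 y else 0

/-- `KB_i(y) = Σ_{t≥0} Σ_{ω ∈ Ωᵗ} δ_ω(y,t)·1_{I_{i+1} ∪ ⋯ ∪ I_N}(T_ω(y))`. -/
def KB (Ωs : Set ℕ) (p : ℕ → ℝ) (k : ℕ → ℕ → ℝ) (ι : ℝ → ℕ) (T : ℕ → ℝ → ℝ)
    (i : ℕ) (y : ℝ) : ℝ :=
  ∑' ω : Words Ωs,
    if i < ι (rwordApply T ω.1 y) then rdelta p k ι T ω.1 y else 0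

/-- `S_n = Σ_{j∈Ω} p_j / k_{n,j}`, the average inverse slope on `I_n`. -/
def Sav (Ωs : Set ℕ) (p : ℕ → ℝ) (k : ℕ → ℕ → ℝ) (n : ℕ) : ℝ :=
  ∑' j : Ωs, p j.1 / k n j.1

/-!
Write `δ_ω` for `rdelta` along a word `ω` started at `y`. By (A2) the words of length `t`
carry total weight `Σ |δ_ω| ≤ ρᵗ`, so all series below converge absolutely. Splitting a
nonempty word as `ω ++ [j]` gives `δ_{ω ++ [j]} = δ_ω · p_j / k_{n,j}` with `n` the interval
visited by `T_ω y`, hence `KI_n = S_n · KJ_n`, where `KJ_n` sums `δ_ω` over all words, the empty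
one included, with `T_ω y ∈ I_n`. Summing over `n`, `Σ KJ_n` is the total weight of all words
and `Σ KI_n` that of the nonempty ones, so `Σ (S_n⁻¹ - 1) KI_n = Σ KJ_n - Σ KI_n = δ_[] = 1`.
-/

theorem sum_tsum_ite_eq_tsum {α β E : Type*} [DecidableEq β] [AddCommGroup E] [UniformSpace E]
    [IsUniformAddGroup E] [CompleteSpace E] [T2Space E] {g : α → E} (hg : Summable g)
    (f : α → β) (s : Finset β) (hf : ∀ a, f a ∈ s) :
    ∑ b ∈ s, ∑' a, (if f a = b then g a else 0) = ∑' a, g a := by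
  have hpiece (b : β) : Summable fun a => if f a = b then g a else 0 :=
    (hg.indicator {a | f a = b}).congr fun a => by simp [Set.indicator_apply]
  rw [← Summable.tsum_finsetSum fun b _ => hpiece b]
  exact tsum_congr fun a => by rw [Finset.sum_ite_eq, if_pos (hf a)]

abbrev NonemptyWords (Ωs : Set ℕ) : Type := {ω : List ℕ // (∀ j ∈ ω, j ∈ Ωs) ∧ ω ≠ []}

def NonemptyWords.toWords {Ωs : Set ℕ} (ω : NonemptyWords Ωs) : Words Ωs := ⟨ω.1, ω.2.1⟩

theorem NonemptyWords.toWords_injective {Ωs : Set ℕ} :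
    Function.Injective (NonemptyWords.toWords (Ωs := Ωs)) :=
  fun _ _ h => Subtype.ext (congrArg (fun w : Words Ωs => w.1) h)

def listEquivWords (Ωs : Set ℕ) : List Ωs ≃ Words Ωs where
  toFun l := ⟨l.map Subtype.val, fun j hj => by
    obtain ⟨a, -, rfl⟩ := List.mem_map.1 hj
    exact a.2⟩
  invFun ω := ω.1.pmap Subtype.mk ω.2
  left_inv l := by induction l <;> simp_all
  right_inv ω := Subtype.ext (by simp [List.map_pmap])

def snocEquiv (Ωs : Set ℕ) : Words Ωs × Ωs ≃ NonemptyWords Ωs where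
  toFun x := ⟨x.1.1 ++ [x.2.1], by
    refine ⟨fun j hj => ?_, by simp⟩
    rcases List.mem_append.1 hj with h | h
    · exact x.1.2 j h
    · exact List.mem_singleton.1 h ▸ x.2.2⟩
  invFun ω :=
    (⟨ω.1.dropLast, fun j hj => ω.2.1 j ((List.dropLast_sublist ω.1).subset hj)⟩,
     ⟨ω.1.getLast ω.2.2, ω.2.1 _ (List.getLast_mem ω.2.2)⟩)
  left_inv _ :=
    Prod.ext (Subtype.ext (List.dropLast_concat ..)) (Subtype.ext (List.getLast_concat ..))
  right_inv ω := Subtype.ext (List.dropLast_append_getLast ω.2.2)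

section

variable {Ωs : Set ℕ} {p : ℕ → ℝ} {k : ℕ → ℕ → ℝ} {ι : ℝ → ℕ} {T : ℕ → ℝ → ℝ}

theorem rwordApply_mapsTo {X : Set ℝ} {ω : List ℕ} (hT : ∀ j ∈ ω, MapsTo (T j) X X) :
    MapsTo (rwordApply T ω) X X := by
  induction ω with
  | nil => exact mapsTo_id X
  | cons j ω ih =>
    exact (ih fun i hi => hT i (List.mem_cons_of_mem _ hi)).comp (hT j List.mem_cons_self)

theorem rdelta_append (ω : List ℕ) (j : ℕ) (y : ℝ) :
    rdelta p k ι T (ω ++ [j]) y = rdelta p k ι T ω y * (p j / k (ι (rwordApply T ω y)) j) := by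
  induction ω generalizing y with
  | nil => simp [rdelta, rwordApply]
  | cons i ω ih =>
    simp only [List.cons_append, rdelta, rwordApply, ih]
    ring

theorem abs_rdelta_cons {j : ℕ} (hj : 0 ≤ p j) (ω : List ℕ) (y : ℝ) :
    |rdelta p k ι T (j :: ω) y| = p j / |k (ι y) j| * |rdelta p k ι T ω (T j y)| := by
  rw [rdelta, abs_mul, abs_div, abs_of_nonneg hj]

variable {X : Set ℝ} {ρ : ℝ}

theorem summable_abs_rdelta_ofFn_and_tsum_le (hp : ∀ j ∈ Ωs, 0 ≤ p j)
    (hT : ∀ j ∈ Ωs, MapsTo (T j) X X)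
    (hA2 : ∀ x ∈ X, Summable (fun j : Ωs => p j / |k (ι x) j|) ∧
      ∑' j : Ωs, p j / |k (ι x) j| ≤ ρ)
    (hρ : 0 ≤ ρ) (t : ℕ) {y : ℝ} (hy : y ∈ X) :
    Summable (fun f : Fin t → Ωs => |rdelta p k ι T (List.ofFn fun i => (f i : ℕ)) y|) ∧
      ∑' f : Fin t → Ωs, |rdelta p k ι T (List.ofFn fun i => (f i : ℕ)) y| ≤ ρ ^ t := by
  induction t generalizing y with
  | zero => exact ⟨.of_finite, by simp [rdelta]⟩
  | succ t ih =>
    set c : Ωs → ℝ := fun j => p j / |k (ι y) j|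
    have hc : ∀ j, 0 ≤ c j := fun j => div_nonneg (hp j j.2) (abs_nonneg _)
    set g : Ωs × (Fin t → Ωs) → ℝ :=
      fun x => c x.1 * |rdelta p k ι T (List.ofFn fun i => (x.2 i : ℕ)) (T x.1 y)|
    have hg : (fun f : Fin (t + 1) → Ωs => |rdelta p k ι T (List.ofFn fun i => (f i : ℕ)) y|) ∘
        Fin.consEquiv (fun _ => Ωs) = g := by
      funext x
      simp only [Function.comp_apply, Fin.consEquiv_apply, List.ofFn_succ, Fin.cons_zero,
        Fin.cons_succ]
      exact abs_rdelta_cons (hp _ x.1.2) _ y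
    have hfiber (j : Ωs) := ih (hT j j.2 hy)
    have hfiber_le (j : Ωs) : ∑' f, g (j, f) ≤ c j * ρ ^ t := by
      simp only [g, tsum_mul_left]
      exact mul_le_mul_of_nonneg_left (hfiber j).2 (hc j)
    have hg_summable : Summable g := by
      refine (summable_prod_of_nonneg fun x => mul_nonneg (hc _) (abs_nonneg _)).2
        ⟨fun j => (hfiber j).1.mul_left (c j), ?_⟩
      exact .of_nonneg_of_le (fun j => tsum_nonneg fun f => mul_nonneg (hc j) (abs_nonneg _))
        hfiber_le ((hA2 y hy).1.mul_right _)
    refine ⟨(Equiv.summable_iff _).1 (hg ▸ hg_summable), ?_⟩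
    have htsum : ∑' f : Fin (t + 1) → Ωs, |rdelta p k ι T (List.ofFn fun i => (f i : ℕ)) y| =
        ∑' x, g x := by
      rw [← hg]
      exact (Equiv.tsum_eq _ _).symm
    rw [htsum, hg_summable.tsum_prod' fun j => (hfiber j).1.mul_left (c j)]
    calc ∑' j, ∑' f, g (j, f) ≤ ∑' j, c j * ρ ^ t :=
          Summable.tsum_le_tsum hfiber_le hg_summable.prod ((hA2 y hy).1.mul_right _)
      _ = (∑' j, c j) * ρ ^ t := tsum_mul_right
      _ ≤ ρ * ρ ^ t := mul_le_mul_of_nonneg_right (hA2 y hy).2 (pow_nonneg hρ t)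
      _ = ρ ^ (t + 1) := (pow_succ' ρ t).symm

theorem summable_abs_rdelta (hp : ∀ j ∈ Ωs, 0 ≤ p j) (hT : ∀ j ∈ Ωs, MapsTo (T j) X X)
    (hA2 : ∀ x ∈ X, Summable (fun j : Ωs => p j / |k (ι x) j|) ∧
      ∑' j : Ωs, p j / |k (ι x) j| ≤ ρ)
    (hρ0 : 0 ≤ ρ) (hρ1 : ρ < 1) {y : ℝ} (hy : y ∈ X) :
    Summable fun ω : Words Ωs => |rdelta p k ι T ω.1 y| := by
  have hlength := fun t => summable_abs_rdelta_ofFn_and_tsum_le hp hT hA2 hρ0 t hy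
  have hsigma : Summable fun x : Σ t, Fin t → Ωs =>
      |rdelta p k ι T (List.ofFn fun i => (x.2 i : ℕ)) y| :=
    (summable_sigma_of_nonneg fun _ => abs_nonneg _).2 ⟨fun t => (hlength t).1,
      .of_nonneg_of_le (fun _ => tsum_nonneg fun _ => abs_nonneg _) (fun t => (hlength t).2)
        (summable_geometric_of_lt_one hρ0 hρ1)⟩
  refine ((List.equivSigmaTuple.symm.trans (listEquivWords Ωs)).summable_iff).1
    (hsigma.congr fun x => ?_)
  show _ = |rdelta p k ι T (List.map Subtype.val (List.ofFn x.2)) y|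
  rw [List.map_ofFn]
  rfl

end

def KJ (Ωs : Set ℕ) (p : ℕ → ℝ) (k : ℕ → ℕ → ℝ) (ι : ℝ → ℕ) (T : ℕ → ℝ → ℝ)
    (n : ℕ) (y : ℝ) : ℝ :=
  ∑' ω : Words Ωs, if ι (rwordApply T ω.1 y) = n then rdelta p k ι T ω.1 y else 0

section

variable {Ωs : Set ℕ} {p : ℕ → ℝ} {k : ℕ → ℕ → ℝ} {ι : ℝ → ℕ} {T : ℕ → ℝ → ℝ} {y : ℝ}

theorem KI_eq_KJ_mul_Sav (hp : ∀ j ∈ Ωs, 0 ≤ p j) {n : ℕ}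
    (hk : Summable fun j : Ωs => p j / |k n j|)
    (hδ : Summable fun ω : Words Ωs => |rdelta p k ι T ω.1 y|) :
    KI Ωs p k ι T n y = KJ Ωs p k ι T n y * Sav Ωs p k n := by
  have hvisit : Summable fun ω : Words Ωs =>
      ‖if ι (rwordApply T ω.1 y) = n then rdelta p k ι T ω.1 y else 0‖ :=
    hδ.of_nonneg_of_le (fun _ => norm_nonneg _) fun ω => by split_ifs <;> simp
  have hslope : Summable fun j : Ωs => ‖p j / k n j‖ :=
    hk.congr fun j => by rw [Real.norm_eq_abs, abs_div, abs_of_nonneg (hp j j.2)]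
  rw [KJ, Sav, tsum_mul_tsum_of_summable_norm hvisit hslope, KI,
    ← (snocEquiv Ωs).tsum_eq]
  refine tsum_congr fun x => ?_
  simp only [snocEquiv, Equiv.coe_fn_mk, List.dropLast_concat, rdelta_append]
  split_ifs with h
  · rw [h]
  · rw [zero_mul]

theorem tsum_rdelta_eq_one_add (hδ : Summable fun ω : Words Ωs => rdelta p k ι T ω.1 y) :
    ∑' ω : Words Ωs, rdelta p k ι T ω.1 y =
      1 + ∑' ω : NonemptyWords Ωs, rdelta p k ι T ω.1 y := by
  classical
  let nil : Words Ωs := ⟨[], by simp⟩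
  have hne (ω : Words Ωs) : ω ≠ nil ↔ ω.1 ≠ [] :=
    not_congr ⟨congrArg (fun w : Words Ωs => w.1), fun h => Subtype.ext h⟩
  rw [hδ.tsum_eq_add_tsum_ite nil, ← NonemptyWords.toWords_injective.tsum_eq]
  · exact congrArg (1 + ·) (tsum_congr fun ω => if_neg ((hne _).2 ω.2.2))
  · intro ω hω
    exact ⟨⟨ω.1, ω.2, (hne ω).1 fun h => hω (if_pos h)⟩, rfl⟩

end

theorem stmt_4_general (Ωs : Set ℕ) (N : ℕ) (p : ℕ → ℝ) (ρ : ℝ)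
    (hρ0 : 0 < ρ) (hρ1 : ρ < 1)
    (hp : ∀ j ∈ Ωs, 0 < p j)
    (k d : ℕ → ℕ → ℝ) (ι : ℝ → ℕ)
    (hι : ∀ x ∈ Icc (0:ℝ) 1, ι x ∈ Finset.Icc 1 N)
    (hT : ∀ j ∈ Ωs, ∀ x ∈ Icc (0:ℝ) 1, Tpl k d ι j x ∈ Icc (0:ℝ) 1)
    (hA2 : ∀ n ∈ Finset.Icc 1 N,
      Summable (fun j : Ωs => p j.1 / |k n j.1|) ∧
        ∑' j : Ωs, p j.1 / |k n j.1| ≤ ρ)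
    (hS : ∀ n ∈ Finset.Icc 1 N, Sav Ωs p k n ≠ 0) :
    ∀ y ∈ Icc (0:ℝ) 1,
      ∑ n ∈ Finset.Icc 1 N, ((Sav Ωs p k n)⁻¹ - 1) * KI Ωs p k ι (Tpl k d ι) n y = 1 := by
  intro y hy
  set T := Tpl k d ι
  have hp_nonneg : ∀ j ∈ Ωs, 0 ≤ p j := fun j hj => (hp j hj).le
  have hδ : Summable fun ω : Words Ωs => |rdelta p k ι T ω.1 y| :=
    summable_abs_rdelta hp_nonneg hT (fun x hx => hA2 _ (hι x hx)) hρ0.le hρ1 hy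
  have hvisit (ω : List ℕ) (hω : ∀ j ∈ ω, j ∈ Ωs) : ι (rwordApply T ω y) ∈ Finset.Icc 1 N :=
    hι _ (rwordApply_mapsTo (fun j hj => hT j (hω j hj)) hy)
  have hsum_KJ : ∑ n ∈ Finset.Icc 1 N, KJ Ωs p k ι T n y = ∑' ω : Words Ωs, rdelta p k ι T ω.1 y :=
    sum_tsum_ite_eq_tsum hδ.of_abs _ _ fun ω => hvisit ω.1 ω.2
  have hsum_KI : ∑ n ∈ Finset.Icc 1 N, KI Ωs p k ι T n y =
      ∑' ω : NonemptyWords Ωs, rdelta p k ι T ω.1 y :=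
    sum_tsum_ite_eq_tsum (hδ.of_abs.comp_injective NonemptyWords.toWords_injective) _ _
      fun ω => hvisit _ fun j hj => ω.2.1 j ((List.dropLast_sublist ω.1).subset hj)
  calc ∑ n ∈ Finset.Icc 1 N, ((Sav Ωs p k n)⁻¹ - 1) * KI Ωs p k ι T n y
      = ∑ n ∈ Finset.Icc 1 N, (KJ Ωs p k ι T n y - KI Ωs p k ι T n y) :=
        Finset.sum_congr rfl fun n hn => by
          rw [KI_eq_KJ_mul_Sav hp_nonneg (hA2 n hn).1 hδ]
          field_simp [hS n hn]
    _ = 1 := by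
        rw [Finset.sum_sub_distrib, hsum_KJ, hsum_KI, tsum_rdelta_eq_one_add hδ.of_abs]
        ring

/-- for every `y ∈ [0,1]`, `Σ_{n=1}^N K_n · KI_n(y) = 1`,
where `K_n = S_n⁻¹ − 1`. -/
theorem stmt_4 (Ωs : Set ℕ) (N : ℕ) (hN : 1 ≤ N) (p : ℕ → ℝ) (ρ : ℝ)
    (hρ0 : 0 < ρ) (hρ1 : ρ < 1)
    (hp : ∀ j ∈ Ωs, 0 < p j) (hpsum : HasSum (fun j : Ωs => p j.1) 1)
    (k d : ℕ → ℕ → ℝ) (ι : ℝ → ℕ)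
    (hι : ∀ x ∈ Icc (0:ℝ) 1, ι x ∈ Finset.Icc 1 N)
    (hk : ∀ n ∈ Finset.Icc 1 N, ∀ j ∈ Ωs, k n j ≠ 0)
    (hT : ∀ j ∈ Ωs, ∀ x ∈ Icc (0:ℝ) 1, Tpl k d ι j x ∈ Icc (0:ℝ) 1)
    (hA2 : ∀ n ∈ Finset.Icc 1 N,
      Summable (fun j : Ωs => p j.1 / |k n j.1|) ∧
        ∑' j : Ωs, p j.1 / |k n j.1| ≤ ρ)
    (hS : ∀ n ∈ Finset.Icc 1 N, Sav Ωs p k n ≠ 0) :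
    ∀ y ∈ Icc (0:ℝ) 1,
      ∑ n ∈ Finset.Icc 1 N, ((Sav Ωs p k n)⁻¹ - 1) * KI Ωs p k ι (Tpl k d ι) n y = 1 :=
  stmt_4_general Ωs N p ρ hρ0 hρ1 hp k d ι hι hT hA2 hS
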